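/- arXiv:1905.10866 — 2 statements merged into one kernel-verified Lean document; each statement's English description precedes it below -/
import Mathlib

section
/- If A is an n×n real matrix all of whose (complex) eigenvalues have modulus strictly less than one, then the series P = Σ_{k=0}^∞ (Aᵀ)^k Q A^k converges for any symmetric positive definite matrix Q, and P is symmetric positive definite and satisfies Aᵀ P A − P = −Q. -/
/-!
Gelfand's formula gives `‖A ^ k‖ ≤ r ^ k` eventually, for some `r < 1`, in the Frobenius norm,
which is invariant under transposition and under the embedding `ℝ → ℂ`; so the series converges
absolutely. Shifting the summation index gives `Aᵀ P A = P - Q`. As a limit of positive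
semidefinite partial sums `P` is positive semidefinite, and then `P = Q + Aᵀ P A` is positive
definite.
-/

open Matrix Filter Topology
open scoped NNReal ENNReal

section BanachAlgebra

variable {A : Type*} [NormedRing A] [NormedAlgebra ℂ A] [CompleteSpace A]

theorem spectrum.eventually_norm_pow_le_of_spectralRadius_lt (a : A) {r : ℝ≥0}
    (h : spectralRadius ℂ a < r) : ∀ᶠ k in atTop, ‖a ^ k‖ ≤ r ^ k := by
  filter_upwards [(pow_nnnorm_pow_one_div_tendsto_nhds_spectralRadius a).eventually_lt_const h,
    eventually_ne_atTop 0] with k hk hk0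
  have hk' : ((‖a ^ k‖₊ : ℝ≥0∞) ^ (1 / (k : ℝ))) ^ (k : ℝ) ≤ (r : ℝ≥0∞) ^ (k : ℝ) :=
    ENNReal.rpow_le_rpow hk.le k.cast_nonneg
  rw [← ENNReal.rpow_mul, one_div_mul_cancel (Nat.cast_ne_zero.mpr hk0), ENNReal.rpow_one,
    ENNReal.rpow_natCast] at hk'
  exact_mod_cast hk'

theorem spectrum.spectralRadius_lt_one_of_forall_norm_lt_one (a : A)
    (h : ∀ z ∈ spectrum ℂ a, ‖z‖ < 1) : spectralRadius ℂ a < 1 := by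
  rcases subsingleton_or_nontrivial A with _ | _
  · simp [spectralRadius, spectrum.of_subsingleton]
  · exact_mod_cast spectralRadius_lt_of_forall_lt a (r := 1) fun z hz => by exact_mod_cast h z hz

end BanachAlgebra

theorem mul_mul_eq_sub_of_hasSum_pow_mul_mul_pow {R : Type*} [Ring R] [TopologicalSpace R]
    [IsTopologicalRing R] [T2Space R] {a b q p : R} (h : HasSum (fun k => b ^ k * q * a ^ k) p) :
    b * p * a = p - q := by
  have hshift : HasSum (fun k => b ^ (k + 1) * q * a ^ (k + 1)) (b * p * a) := by
    simpa only [pow_succ' b, pow_succ a, mul_assoc] using (h.mul_left b).mul_right a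
  simpa using hshift.unique ((hasSum_nat_add_iff' 1).mpr h)

namespace Matrix

open scoped ComplexOrder

variable {m 𝕜 : Type*} [Fintype m] [RCLike 𝕜]

theorem isClosed_setOf_posSemidef : IsClosed {M : Matrix m m 𝕜 | M.PosSemidef} := by
  simp only [posSemidef_iff_dotProduct_mulVec, Set.ofPred_and, Set.ofPred_forall]
  refine .inter (isClosed_eq continuous_id.matrix_conjTranspose continuous_id) <|
    isClosed_iInter fun x => isClosed_le continuous_const ?_
  fun_prop

theorem PosSemidef.of_hasSum {ι : Type*} {f : ι → Matrix m m 𝕜} {P : Matrix m m 𝕜}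
    (hf : HasSum f P) (h : ∀ i, (f i).PosSemidef) : P.PosSemidef :=
  isClosed_setOf_posSemidef.mem_of_tendsto hf <|
    .of_forall fun s => posSemidef_sum s fun i _ => h i

end Matrix

section Frobenius

attribute [local instance] Matrix.frobeniusNormedAddCommGroup Matrix.frobeniusNormedRing
  Matrix.frobeniusNormedAlgebra

variable {m : Type*} [Fintype m] [DecidableEq m]

theorem Matrix.summable_transpose_pow_mul_mul_pow {A : Matrix m m ℝ}
    (hA : ∀ z ∈ spectrum ℂ (A.map Complex.ofReal), ‖z‖ < 1) (Q : Matrix m m ℝ) :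
    Summable fun k => (Aᵀ) ^ k * Q * A ^ k := by
  obtain ⟨r, hρr, hr⟩ := ENNReal.lt_iff_exists_nnreal_btwn.mp <|
    spectrum.spectralRadius_lt_one_of_forall_norm_lt_one _ hA
  have hpow : ∀ᶠ k in atTop, ‖A ^ k‖ ≤ r ^ k := by
    filter_upwards [spectrum.eventually_norm_pow_le_of_spectralRadius_lt _ hρr] with k hk
    have hmap : A.map Complex.ofReal ^ k = (A ^ k).map Complex.ofReal :=
      (map_pow Complex.ofRealHom.mapMatrix A k).symm
    rwa [hmap, frobenius_norm_map_eq _ _ Complex.norm_real] at hk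
  have hr2 : (r : ℝ) ^ 2 < 1 := by
    have : (r : ℝ) < 1 := by exact_mod_cast hr
    nlinarith [r.coe_nonneg]
  refine .of_norm_bounded_eventually_nat
    ((summable_geometric_of_lt_one (by positivity) hr2).mul_left ‖Q‖) ?_
  filter_upwards [hpow] with k hk
  calc ‖(Aᵀ) ^ k * Q * A ^ k‖ ≤ ‖(Aᵀ) ^ k‖ * ‖Q‖ * ‖A ^ k‖ := norm_mul₃_le
    _ = ‖A ^ k‖ * ‖Q‖ * ‖A ^ k‖ := by rw [← transpose_pow, frobenius_norm_transpose]
    _ ≤ r ^ k * ‖Q‖ * r ^ k := by gcongr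
    _ = ‖Q‖ * ((r : ℝ) ^ 2) ^ k := by ring

end Frobenius

/-- If all complex eigenvalues of the real matrix `A` have modulus strictly less than one,
then for any symmetric positive definite `Q` the series `P = Σ_{k} (Aᵀ)^k Q A^k` converges,
and its sum `P` is symmetric positive definite and satisfies `Aᵀ P A − P = −Q`. -/
theorem stmt_1 (n : ℕ) (A Q : Matrix (Fin n) (Fin n) ℝ)
    (hspec : ∀ μ ∈ spectrum ℂ (A.map Complex.ofReal), ‖μ‖ < 1)
    (hQ : Q.PosDef) :
    ∃ P : Matrix (Fin n) (Fin n) ℝ,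
      HasSum (fun k : ℕ => (Aᵀ) ^ k * Q * A ^ k) P ∧
      P.IsSymm ∧ P.PosDef ∧ Aᵀ * P * A - P = -Q := by
  obtain ⟨P, hP⟩ := summable_transpose_pow_mul_mul_pow hspec Q
  have hlyap := mul_mul_eq_sub_of_hasSum_pow_mul_mul_pow hP
  have hPsd : P.PosSemidef := PosSemidef.of_hasSum hP fun k => by
    have := hQ.posSemidef.conjTranspose_mul_mul_same (A ^ k)
    rwa [conjTranspose_eq_transpose_of_trivial, transpose_pow] at this
  have hPd : P.PosDef := by
    rw [show P = Q + Aᵀ * P * A by rw [hlyap]; abel]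
    simpa using hQ.add_posSemidef (hPsd.conjTranspose_mul_mul_same A)
  exact ⟨P, hP, isHermitian_iff_isSymm.mp hPd.isHermitian, hPd, by rw [hlyap]; abel⟩
end

section
/- If A is an n×n real matrix with some eigenvalue of modulus greater than 1, and P satisfies Aᵀ P A − P = −I with P symmetric, then P is not positive semidefinite: there exists x ≠ 0 with xᵀ P x ≤ 0. -/
/-!
Take a complex eigenvector `v` of `A` for the eigenvalue `λ`. Evaluating `Aᴴ P A - P = -1` at
`v` gives `(|λ|² - 1) v* P v = -‖v‖² < 0`, so `Re (v* P v) < 0`. Writing `v = x + i y` with `x, y`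
real, that real part is `xᵀ P x + yᵀ P y`, so one of `x`, `y` is a nonzero vector on which the
quadratic form is negative.
-/

open Matrix

namespace Matrix

variable {n : Type*} [Fintype n]

theorem exists_mulVec_eq_smul_of_mem_spectrum {K : Type*} [Field K] [DecidableEq n]
    {M : Matrix n n K} {μ : K} (h : μ ∈ spectrum K M) : ∃ v ≠ 0, M *ᵥ v = μ • v := by
  rw [← spectrum_toLin', ← Module.End.hasEigenvalue_iff_mem_spectrum] at h
  obtain ⟨v, hv, hv0⟩ := h.exists_hasEigenvector
  exact ⟨v, hv0, by simpa using Module.End.mem_eigenspace_iff.mp hv⟩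

theorem exists_ne_zero_dotProduct_mulVec_neg_of_add_neg {R : Type*} [CommRing R] [LinearOrder R]
    [IsStrictOrderedRing R] (P : Matrix n n R) {x y : n → R}
    (h : x ⬝ᵥ P *ᵥ x + y ⬝ᵥ P *ᵥ y < 0) : ∃ z ≠ 0, z ⬝ᵥ P *ᵥ z < 0 := by
  by_cases hx : x ⬝ᵥ P *ᵥ x < 0
  · exact ⟨x, fun h0 => by simp [h0] at hx, hx⟩
  · have hy : y ⬝ᵥ P *ᵥ y < 0 := by linarith
    exact ⟨y, fun h0 => by simp [h0] at hy, hy⟩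

section StarRing

variable {R : Type*} [CommRing R] [StarRing R]

theorem star_dotProduct_conjTranspose_mul_mul_mulVec_of_mulVec_eq_smul (A P : Matrix n n R)
    {v : n → R} {μ : R} (hv : A *ᵥ v = μ • v) :
    star v ⬝ᵥ (Aᴴ * P * A) *ᵥ v = star μ * μ * (star v ⬝ᵥ P *ᵥ v) := by
  rw [← mulVec_mulVec, ← mulVec_mulVec, dotProduct_mulVec, ← star_mulVec, hv, star_smul,
    mulVec_smul, smul_dotProduct, dotProduct_smul, smul_smul, smul_eq_mul]

theorem mul_star_dotProduct_mulVec_of_discrete_lyapunov [DecidableEq n] {A P : Matrix n n R}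
    (hL : Aᴴ * P * A - P = -1) {v : n → R} {μ : R} (hv : A *ᵥ v = μ • v) :
    (star μ * μ - 1) * (star v ⬝ᵥ P *ᵥ v) = -(star v ⬝ᵥ v) := by
  have h := congrArg (fun M => star v ⬝ᵥ M *ᵥ v) hL
  simp only [sub_mulVec, dotProduct_sub, neg_mulVec, dotProduct_neg,
    star_dotProduct_conjTranspose_mul_mul_mulVec_of_mulVec_eq_smul A P hv] at h
  rw [sub_mul, one_mul, h, one_mulVec]

end StarRing

open scoped ComplexOrder in
theorem re_star_dotProduct_self_pos {v : n → ℂ} (hv : v ≠ 0) : 0 < (star v ⬝ᵥ v).re :=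
  (Complex.pos_iff.mp (dotProduct_star_self_pos_iff.mpr hv)).1

theorem re_star_dotProduct_map_ofReal_mulVec (P : Matrix n n ℝ) (v : n → ℂ) :
    (star v ⬝ᵥ P.map Complex.ofReal *ᵥ v).re =
      (fun i => (v i).re) ⬝ᵥ P *ᵥ (fun i => (v i).re) +
        (fun i => (v i).im) ⬝ᵥ P *ᵥ (fun i => (v i).im) := by
  simp only [dotProduct, mulVec, Pi.star_apply, map_apply, Finset.mul_sum, Complex.re_sum,
    ← Finset.sum_add_distrib]
  refine Finset.sum_congr rfl fun i _ => Finset.sum_congr rfl fun j _ => ?_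
  simp only [Complex.star_def, Complex.mul_re, Complex.mul_im, Complex.conj_re,
    Complex.conj_im, Complex.ofReal_re, Complex.ofReal_im]
  ring

end Matrix

theorem stmt_14_general (n : ℕ) (A P : Matrix (Fin n) (Fin n) ℝ)
    (hLyap : Aᵀ * P * A - P = -1)
    (lam : ℂ) (hlam : lam ∈ spectrum ℂ (A.map Complex.ofReal))
    (habs : 1 < ‖lam‖) :
    ∃ x : Fin n → ℝ, x ≠ 0 ∧ x ⬝ᵥ P *ᵥ x ≤ 0 := by
  obtain ⟨v, hv0, hv⟩ := exists_mulVec_eq_smul_of_mem_spectrum hlam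
  have hLyapC : (A.map Complex.ofReal)ᴴ * P.map Complex.ofReal * A.map Complex.ofReal
      - P.map Complex.ofReal = -1 := by
    rw [← conjTranspose_map _ fun _ => (Complex.conj_ofReal _).symm,
      conjTranspose_eq_transpose_of_trivial]
    have h := congrArg Complex.ofRealHom.mapMatrix hLyap
    simp only [map_sub, map_mul, map_neg, map_one] at h
    exact h
  have hnormSq : 1 < Complex.normSq lam := by
    rw [Complex.normSq_eq_norm_sq]
    exact one_lt_pow₀ habs two_ne_zero
  have key := congrArg Complex.re (mul_star_dotProduct_mulVec_of_discrete_lyapunov hLyapC hv)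
  rw [Complex.star_def, ← Complex.normSq_eq_conj_mul_self, ← Complex.ofReal_one,
    ← Complex.ofReal_sub, Complex.re_ofReal_mul, Complex.neg_re,
    re_star_dotProduct_map_ofReal_mulVec] at key
  have hneg : _ + _ < (0 : ℝ) :=
    neg_of_mul_neg_right (key ▸ neg_neg_of_pos (re_star_dotProduct_self_pos hv0)) (by linarith)
  obtain ⟨x, hx0, hx⟩ := exists_ne_zero_dotProduct_mulVec_neg_of_add_neg P hneg
  exact ⟨x, hx0, hx.le⟩

/-- If `A` has an eigenvalue of modulus greater than one and the symmetric matrix `P`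
satisfies `Aᵀ P A − P = −I`, then `P` is not positive semidefinite: the quadratic form
`xᵀ P x` is nonpositive at some `x ≠ 0`. -/
theorem stmt_14 (n : ℕ) (A P : Matrix (Fin n) (Fin n) ℝ)
    (hPsym : Pᵀ = P)
    (hLyap : Aᵀ * P * A - P = -1)
    (lam : ℂ) (hlam : lam ∈ spectrum ℂ (A.map Complex.ofReal))
    (habs : 1 < ‖lam‖) :
    ∃ x : Fin n → ℝ, x ≠ 0 ∧ x ⬝ᵥ P *ᵥ x ≤ 0 :=
  stmt_14_general n A P hLyap lam hlam habs
end
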